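/- arXiv:1612.06210 — 4 statements merged into one kernel-verified Lean document; each statement's English description precedes it below -/
import Mathlib

section
/- The tangent function satisfies tan x = Σ_{n=0}^∞ (-1)^n T_n x^{2n+1}/(2n+1)! (as formal power series / for |x| < π/2), where T_n = Σ_{i=0}^n C(2n, 2i) E_{2i} E_{2n-2i} and E_k are the Euler numbers. -/
/-!
Over a field of characteristic zero let `C`, `S` be the formal power series of `cosh` and `sinh`,
`sech = C⁻¹` and `tanh = S * sech`. From `C' = S`, `S' = C` and `C² - S² = 1` one gets
`tanh' = sech²`, and since `sech = ∑ E_k X^k / k!` is even, the coefficient of `X^(2n)` in `sech²`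
is `T_n / (2n)!`; hence `tanh = ∑ T_n X^(2n+1) / (2n+1)!`.

Analytically, `cosh` has no zeros on the disc `|z| < π/2`, so `Complex.tanh` is holomorphic there
and its Taylor series converges on the whole disc. Multiplying it by the everywhere convergent
series of `cosh` gives the series of `sinh`, so by uniqueness of power series expansions the
Taylor series of `tanh` is the formal one. Finally `tan x = -i tanh (i x)`.
-/

open Finset Nat

lemma Finset.sum_range_two_mul_add_one_of_odd_eq_zero {M : Type*} [AddCommMonoid M]
    (f : ℕ → M) (hf : ∀ k, Odd k → f k = 0) (n : ℕ) :
    ∑ k ∈ range (2 * n + 1), f k = ∑ i ∈ range (n + 1), f (2 * i) := by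
  induction n with
  | zero => simp
  | succ n ih =>
    rw [show 2 * (n + 1) + 1 = 2 * n + 1 + 1 + 1 by ring, sum_range_succ, sum_range_succ, ih,
      hf _ (odd_two_mul_add_one n), add_zero, sum_range_succ _ (n + 1), mul_add_one]

lemma inv_factorial_succ_mul {K : Type*} [Field K] [CharZero K] (n : ℕ) :
    ((n + 1)! : K)⁻¹ * (n + 1) = (n ! : K)⁻¹ := by
  rw [factorial_succ, cast_mul]
  field_simp
  push_cast
  ring

lemma Complex.cosh_ne_zero_of_norm_lt {z : ℂ} (hz : ‖z‖ < Real.pi / 2) :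
    Complex.cosh z ≠ 0 := by
  rw [← Complex.cos_mul_I, Ne, Complex.cos_eq_zero_iff]
  rintro ⟨k, hk⟩
  have hk1 : (1 : ℝ) ≤ |2 * (k : ℝ) + 1| := by
    exact_mod_cast Int.one_le_abs (show 2 * k + 1 ≠ 0 by omega)
  have hnorm : ‖z * Complex.I‖ = |2 * (k : ℝ) + 1| * (Real.pi / 2) := by
    rw [hk, show (2 * (k : ℂ) + 1) * Real.pi / 2 = ((2 * (k : ℝ) + 1) * (Real.pi / 2) : ℝ) by
      push_cast; ring, Complex.norm_real, Real.norm_eq_abs, abs_mul,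
      abs_of_pos (by positivity : 0 < Real.pi / 2)]
  rw [norm_mul, Complex.norm_I, mul_one] at hnorm
  nlinarith [Real.pi_pos]

namespace PowerSeries

section Hyperbolic

variable (K : Type*) [Field K]

noncomputable def coshSeries : K⟦X⟧ := mk fun n => if Even n then 1 / (n ! : K) else 0

noncomputable def sinhSeries : K⟦X⟧ := mk fun n => if Even n then 0 else 1 / (n ! : K)

noncomputable def sechSeries : K⟦X⟧ := (coshSeries K)⁻¹

noncomputable def tanhSeries : K⟦X⟧ := sinhSeries K * sechSeries K

noncomputable def eulerNumber (n : ℕ) : K := n ! * coeff n (sechSeries K)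

variable {K}

@[simp] lemma constantCoeff_coshSeries : constantCoeff (coshSeries K) = 1 := by
  simp [coshSeries, ← coeff_zero_eq_constantCoeff_apply]

@[simp] lemma constantCoeff_sinhSeries : constantCoeff (sinhSeries K) = 0 := by
  simp [sinhSeries, ← coeff_zero_eq_constantCoeff_apply]

lemma coshSeries_mul_sechSeries : coshSeries K * sechSeries K = 1 :=
  PowerSeries.mul_inv_cancel _ (by simp)

lemma sechSeries_eq_mk_eulerNumber [CharZero K] :
    sechSeries K = mk fun n => eulerNumber K n / n ! := by
  ext n
  simp [eulerNumber, factorial_ne_zero]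

lemma eq_eulerNumber_of_coshSeries_mul_eq_one [CharZero K] {e : ℕ → K}
    (he : coshSeries K * (mk fun n => e n / n !) = 1) : e = eulerNumber K := by
  have h : (mk fun n => e n / n !) = mk fun n => eulerNumber K n / n ! := by
    rw [← sechSeries_eq_mk_eulerNumber, sechSeries, eq_inv_iff_mul_eq_one (by simp), mul_comm, he]
  funext n
  simpa [factorial_ne_zero] using congrArg (coeff n) h

lemma map_coshSeries {L : Type*} [Field L] (f : K →+* L) :
    map f (coshSeries K) = coshSeries L := by
  ext n
  simp [coshSeries, apply_ite f]

lemma map_sinhSeries {L : Type*} [Field L] (f : K →+* L) :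
    map f (sinhSeries K) = sinhSeries L := by
  ext n
  simp [sinhSeries, apply_ite f]

lemma map_tanhSeries {L : Type*} [Field L] (f : K →+* L) :
    map f (tanhSeries K) = tanhSeries L := by
  have hsech : map f (sechSeries K) = sechSeries L := by
    unfold sechSeries
    rw [eq_inv_iff_mul_eq_one (by simp), ← map_coshSeries f, ← map_mul,
      PowerSeries.inv_mul_cancel _ (by simp), map_one]
  rw [tanhSeries, map_mul, map_sinhSeries, hsech, tanhSeries]

lemma rescale_neg_one_coshSeries : rescale (-1) (coshSeries K) = coshSeries K := by
  ext n
  rcases Nat.even_or_odd n with hn | hn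
  · simp [coeff_rescale, coshSeries, hn, hn.neg_one_pow]
  · simp [coeff_rescale, coshSeries, Nat.not_even_iff_odd.2 hn]

lemma rescale_neg_one_sinhSeries : rescale (-1) (sinhSeries K) = -sinhSeries K := by
  ext n
  rcases Nat.even_or_odd n with hn | hn
  · simp [coeff_rescale, sinhSeries, hn]
  · simp [coeff_rescale, sinhSeries, Nat.not_even_iff_odd.2 hn, hn.neg_one_pow]

lemma rescale_neg_one_sechSeries : rescale (-1) (sechSeries K) = sechSeries K := by
  rw [sechSeries, eq_inv_iff_mul_eq_one (by simp)]
  nth_rewrite 2 [← rescale_neg_one_coshSeries]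
  rw [← map_mul, PowerSeries.inv_mul_cancel _ (by simp), map_one]

lemma rescale_neg_one_tanhSeries : rescale (-1) (tanhSeries K) = -tanhSeries K := by
  rw [tanhSeries, map_mul, rescale_neg_one_sinhSeries, rescale_neg_one_sechSeries, neg_mul]

variable [CharZero K]

lemma coeff_eq_zero_of_rescale_neg_one_eq_self {f : K⟦X⟧} (hf : rescale (-1) f = f) {n : ℕ}
    (hn : Odd n) : coeff n f = 0 := by
  have h := congrArg (coeff n) hf
  rw [coeff_rescale, hn.neg_one_pow, neg_one_mul] at h
  exact self_eq_neg.mp h.symm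

lemma coeff_eq_zero_of_rescale_neg_one_eq_neg {f : K⟦X⟧} (hf : rescale (-1) f = -f) {n : ℕ}
    (hn : Even n) : coeff n f = 0 := by
  have h := congrArg (coeff n) hf
  rw [coeff_rescale, hn.neg_one_pow, one_mul, map_neg] at h
  exact self_eq_neg.mp h

lemma eulerNumber_eq_zero_of_odd {n : ℕ} (hn : Odd n) : eulerNumber K n = 0 := by
  rw [eulerNumber, coeff_eq_zero_of_rescale_neg_one_eq_self rescale_neg_one_sechSeries hn,
    mul_zero]

@[simp] lemma derivative_coshSeries : d⁄dX K (coshSeries K) = sinhSeries K := by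
  ext n
  rcases Nat.even_or_odd n with hn | hn
  · simp [coeff_derivative, coshSeries, sinhSeries, hn, Nat.even_add_one]
  · simp [coeff_derivative, coshSeries, sinhSeries, hn, inv_factorial_succ_mul]

@[simp] lemma derivative_sinhSeries : d⁄dX K (sinhSeries K) = coshSeries K := by
  ext n
  rcases Nat.even_or_odd n with hn | hn
  · simp [coeff_derivative, coshSeries, sinhSeries, hn, Nat.even_add_one, inv_factorial_succ_mul]
  · simp [coeff_derivative, coshSeries, sinhSeries, hn]

lemma coshSeries_sq_sub_sinhSeries_sq : coshSeries K ^ 2 - sinhSeries K ^ 2 = 1 := by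
  refine derivative.ext ?_ (by simp)
  simp only [map_sub, derivative_pow, derivative_coshSeries, derivative_sinhSeries, derivative_one]
  ring

lemma derivative_tanhSeries : d⁄dX K (tanhSeries K) = sechSeries K ^ 2 := by
  rw [tanhSeries, Derivation.leibniz, sechSeries, derivative_inv', derivative_coshSeries,
    derivative_sinhSeries, smul_eq_mul, smul_eq_mul, ← sechSeries]
  linear_combination sechSeries K ^ 2 * coshSeries_sq_sub_sinhSeries_sq (K := K)
    - coshSeries K * sechSeries K * coshSeries_mul_sechSeries (K := K)

lemma coeff_mk_div_factorial_mul (a b : ℕ → K) (n : ℕ) :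
    coeff n ((mk fun k => a k / k !) * (mk fun k => b k / k !)) =
      (∑ k ∈ range (n + 1), (n.choose k : K) * a k * b (n - k)) / n ! := by
  rw [coeff_mul, Nat.sum_antidiagonal_eq_sum_range_succ_mk, sum_div]
  refine sum_congr rfl fun k hk => ?_
  have : (n ! : K) ≠ 0 := cast_ne_zero.2 (factorial_ne_zero n)
  simp only [coeff_mk]
  rw [cast_choose K (Nat.lt_succ_iff.mp (mem_range.mp hk))]
  field_simp

lemma coeff_two_mul_mk_div_factorial_sq {e : ℕ → K} (he : ∀ k, Odd k → e k = 0) (n : ℕ) :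
    coeff (2 * n) ((mk fun k => e k / k !) ^ 2) =
      (∑ i ∈ range (n + 1), ((2 * n).choose (2 * i) : K) * e (2 * i) * e (2 * n - 2 * i)) /
        (2 * n)! := by
  rw [sq, coeff_mk_div_factorial_mul, sum_range_two_mul_add_one_of_odd_eq_zero]
  intro k hk
  rw [he k hk, mul_zero, zero_mul]

lemma coeff_two_mul_add_one_tanhSeries (n : ℕ) :
    coeff (2 * n + 1) (tanhSeries K) =
      (∑ i ∈ range (n + 1), ((2 * n).choose (2 * i) : K) * eulerNumber K (2 * i) *
        eulerNumber K (2 * n - 2 * i)) / (2 * n + 1)! := by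
  have h := coeff_derivative (tanhSeries K) (2 * n)
  rw [derivative_tanhSeries, sechSeries_eq_mk_eulerNumber,
    coeff_two_mul_mk_div_factorial_sq (fun _ => eulerNumber_eq_zero_of_odd)] at h
  rw [div_eq_iff (cast_ne_zero.2 (factorial_ne_zero _))] at h
  rw [eq_div_iff (cast_ne_zero.2 (factorial_ne_zero _)), factorial_succ, cast_mul]
  linear_combination (norm := (push_cast; ring)) -h

end Hyperbolic

open Metric FormalMultilinearSeries

section Analytic

variable {p q : ℂ⟦X⟧} {f g : ℂ → ℂ} {r : ℝ}

lemma ofReal_le_radius_of_hasSum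
    (hp : ∀ z ∈ ball (0 : ℂ) r, HasSum (fun n => coeff n p * z ^ n) (f z)) :
    ENNReal.ofReal r ≤ (ofScalars ℂ fun n => coeff n p).radius := by
  refine ENNReal.le_of_forall_nnreal_lt fun t ht => ?_
  have ht' : (t : ℝ) < r := by simpa using ENNReal.toReal_lt_of_lt_ofReal ht
  have h := (hp t (by simpa using ht')).summable.tendsto_atTop_zero.norm
  refine le_radius_of_tendsto _ (l := 0) ?_
  simpa [ofScalars_norm] using h

lemma summable_norm_coeff_mul_pow_of_hasSum
    (hp : ∀ z ∈ ball (0 : ℂ) r, HasSum (fun n => coeff n p * z ^ n) (f z))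
    {z : ℂ} (hz : z ∈ ball (0 : ℂ) r) : Summable fun n => ‖coeff n p * z ^ n‖ := by
  have hzr : (‖z‖₊ : ENNReal) < (ofScalars ℂ fun n => coeff n p).radius :=
    lt_of_lt_of_le (by simpa using hz) (ofReal_le_radius_of_hasSum hp)
  simpa [ofScalars_norm] using summable_norm_mul_pow _ hzr

lemma eq_of_hasSum_coeff_mul_pow (hr : 0 < r)
    (hp : ∀ z ∈ ball (0 : ℂ) r, HasSum (fun n => coeff n p * z ^ n) (f z))
    (hq : ∀ z ∈ ball (0 : ℂ) r, HasSum (fun n => coeff n q * z ^ n) (f z)) : p = q := by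
  have hexpansion {s : ℂ⟦X⟧}
      (hs : ∀ z ∈ ball (0 : ℂ) r, HasSum (fun n => coeff n s * z ^ n) (f z)) :
      HasFPowerSeriesAt f (ofScalars ℂ fun n => coeff n s) 0 :=
    ⟨ENNReal.ofReal r,
      { r_le := ofReal_le_radius_of_hasSum hs
        r_pos := ENNReal.ofReal_pos.2 hr
        hasSum := fun {y} hy => by
          simpa [ofScalars_apply_eq, mul_comm] using hs y (by simpa using hy) }⟩
  ext n
  exact congrFun (ofScalars_series_injective ℂ ℂ
    ((hexpansion hp).eq_formalMultilinearSeries (hexpansion hq))) n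

lemma hasSum_coeff_mul_mul_pow
    (hp : ∀ z ∈ ball (0 : ℂ) r, HasSum (fun n => coeff n p * z ^ n) (f z))
    (hq : ∀ z ∈ ball (0 : ℂ) r, HasSum (fun n => coeff n q * z ^ n) (g z)) :
    ∀ z ∈ ball (0 : ℂ) r, HasSum (fun n => coeff n (p * q) * z ^ n) (f z * g z) := by
  intro z hz
  have hpz := summable_norm_coeff_mul_pow_of_hasSum hp hz
  have hqz := summable_norm_coeff_mul_pow_of_hasSum hq hz
  have hcauchy := (summable_norm_sum_mul_antidiagonal_of_summable_norm hpz hqz).of_norm.hasSum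
  rw [← tsum_mul_tsum_eq_tsum_sum_antidiagonal_of_summable_norm hpz hqz, (hp z hz).tsum_eq,
    (hq z hz).tsum_eq] at hcauchy
  refine hcauchy.congr_fun fun n => ?_
  rw [coeff_mul, sum_mul]
  refine sum_congr rfl fun ij hij => ?_
  rw [← mem_antidiagonal.mp hij, pow_add]
  ring

end Analytic

lemma hasSum_coeff_coshSeries_mul_pow (z : ℂ) :
    HasSum (fun n => coeff n (coshSeries ℂ) * z ^ n) (Complex.cosh z) := by
  refine ((mul_right_injective₀ two_ne_zero).hasSum_iff fun n hn => ?_).mp ?_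
  · have hodd : ¬Even n := fun ⟨m, hm⟩ => hn ⟨m, by dsimp only; omega⟩
    simp [coshSeries, hodd]
  · simpa [coshSeries, div_eq_inv_mul, Function.comp_def] using Complex.hasSum_cosh z

lemma hasSum_coeff_sinhSeries_mul_pow (z : ℂ) :
    HasSum (fun n => coeff n (sinhSeries ℂ) * z ^ n) (Complex.sinh z) := by
  have hinj : Function.Injective fun n : ℕ => 2 * n + 1 := fun a b h => by simpa using h
  refine (hinj.hasSum_iff fun n hn => ?_).mp ?_
  · have heven : Even n := by
      rcases Nat.even_or_odd n with h | ⟨m, hm⟩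
      · exact h
      · exact absurd ⟨m, hm.symm⟩ hn
    simp [sinhSeries, heven]
  · simpa [sinhSeries, div_eq_inv_mul, Function.comp_def] using Complex.hasSum_sinh z

lemma hasSum_coeff_tanhSeries_mul_pow {z : ℂ} (hz : ‖z‖ < Real.pi / 2) :
    HasSum (fun n => coeff n (tanhSeries ℂ) * z ^ n) (Complex.tanh z) := by
  have hcosh {w : ℂ} (hw : w ∈ ball (0 : ℂ) (Real.pi / 2)) : Complex.cosh w ≠ 0 :=
    Complex.cosh_ne_zero_of_norm_lt (mem_ball_zero_iff.mp hw)
  have hdiff : DifferentiableOn ℂ Complex.tanh (ball 0 (Real.pi / 2)) := by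
    intro w hw
    rw [show Complex.tanh = fun w => Complex.sinh w / Complex.cosh w from
      funext Complex.tanh_eq_sinh_div_cosh]
    exact (Complex.differentiableAt_sinh.div Complex.differentiableAt_cosh
      (hcosh hw)).differentiableWithinAt
  set taylor : ℂ⟦X⟧ := mk fun n => (n ! : ℂ)⁻¹ * iteratedDeriv n Complex.tanh 0
  have hTaylor : ∀ w ∈ ball (0 : ℂ) (Real.pi / 2),
      HasSum (fun n => coeff n taylor * w ^ n) (Complex.tanh w) := fun w hw => by
    simpa [taylor, mul_comm, mul_left_comm] using Complex.hasSum_taylorSeries_on_ball hdiff hw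
  have hsinh : ∀ w ∈ ball (0 : ℂ) (Real.pi / 2),
      HasSum (fun n => coeff n (coshSeries ℂ * taylor) * w ^ n) (Complex.sinh w) := fun w hw => by
    have h := hasSum_coeff_mul_mul_pow (fun w _ => hasSum_coeff_coshSeries_mul_pow w) hTaylor w hw
    rwa [Complex.tanh_eq_sinh_div_cosh, mul_div_cancel₀ _ (hcosh hw)] at h
  have htaylor_eq : taylor = tanhSeries ℂ := by
    rw [tanhSeries, ← eq_of_hasSum_coeff_mul_pow (by positivity) hsinh
      fun w _ => hasSum_coeff_sinhSeries_mul_pow w, mul_comm, ← mul_assoc,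
      mul_comm (sechSeries ℂ), coshSeries_mul_sechSeries, one_mul]
  exact htaylor_eq ▸ hTaylor z (mem_ball_zero_iff.mpr hz)

end PowerSeries

open PowerSeries in
lemma Real.hasSum_tan {x : ℝ} (hx : |x| < Real.pi / 2) :
    HasSum (fun n => (-1) ^ n * coeff (2 * n + 1) (tanhSeries ℝ) * x ^ (2 * n + 1))
      (Real.tan x) := by
  have h := hasSum_coeff_tanhSeries_mul_pow (z := x * Complex.I) (by simpa using hx)
  rw [Complex.tanh_mul_I, ← map_tanhSeries Complex.ofRealHom] at h
  have hinj : Function.Injective fun n : ℕ => 2 * n + 1 := fun a b h => by simpa using h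
  have hodd := (hinj.hasSum_iff fun n hn => ?_).mpr h
  · rw [← Complex.hasSum_ofReal, Complex.ofReal_tan, ← hasSum_mul_right_iff Complex.I_ne_zero]
    refine hodd.congr_fun fun n => ?_
    have hI : Complex.I ^ (2 * n + 1) = (-1) ^ n * Complex.I := by
      rw [pow_succ, pow_mul, Complex.I_sq]
    simp only [Function.comp_apply, coeff_map, Complex.ofRealHom_eq_coe, mul_pow, hI]
    push_cast
    ring
  · have heven : Even n := by
      rcases Nat.even_or_odd n with h | ⟨m, hm⟩
      · exact h
      · exact absurd ⟨m, hm.symm⟩ hn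
    rw [coeff_map, coeff_eq_zero_of_rescale_neg_one_eq_neg rescale_neg_one_tanhSeries heven,
      map_zero, zero_mul]

/-- `tan x = ∑ (-1)^n T_n x^{2n+1}/(2n+1)!` for `|x| < π/2`, where
`T_n = ∑_{i=0}^n C(2n,2i) E_{2i} E_{2n-2i}` and the Euler numbers are defined by
`1/cosh t = ∑ E_n t^n/n!`. -/
theorem tan_series_euler (E : ℕ → ℝ)
    (hE : (PowerSeries.mk fun m => if Even m then (1 : ℝ) / (Nat.factorial m) else 0) *
        (PowerSeries.mk fun n => E n / (Nat.factorial n)) = 1) :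
    ∀ x : ℝ, |x| < Real.pi / 2 →
      HasSum (fun n : ℕ =>
          (-1 : ℝ) ^ n *
            (∑ i ∈ Finset.range (n + 1),
              (Nat.choose (2 * n) (2 * i) : ℝ) * E (2 * i) * E (2 * n - 2 * i)) *
            x ^ (2 * n + 1) / (Nat.factorial (2 * n + 1) : ℝ))
        (Real.tan x) := by
  intro x hx
  obtain rfl : E = PowerSeries.eulerNumber ℝ :=
    PowerSeries.eq_eulerNumber_of_coshSeries_mul_eq_one hE
  refine (Real.hasSum_tan hx).congr_fun fun n => ?_
  rw [PowerSeries.coeff_two_mul_add_one_tanhSeries]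
  ring
end

section
/- For N ≥ 1 and n ≥ 0, Σ_{i=0}^n C(n,i) E_{N,i} E_{N,n-i} = Σ_{k=0}^n C(n,k) ((2N-k)/(2N)) E_{N,k} Ê_{N-1,n-k}. -/
/-!
Let `A`, `B` be the exponential generating functions of `E_N` and `Ê_{N-1}`, and `F` the tail of
`cosh` starting at `t^{2N}`, so that `F * A = M := t^{2N}/(2N)!` and `F' * B = M'`. Differentiating
the first relation and using `t * M' = 2N * M` yields the power series identity
`2N * A² = (2N * A - t * A') * B`; the binomial convolutions in the claim are `n!` times its `n`-th
coefficients.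
-/

open PowerSeries Finset

namespace PowerSeries

variable {R : Type*}

theorem coeff_X_mul_derivative [CommSemiring R] (f : R⟦X⟧) (n : ℕ) :
    coeff n (X * d⁄dX R f) = n * coeff n f := by
  cases n with
  | zero => simp
  | succ n => rw [coeff_succ_X_mul, coeff_derivative, mul_comm]; push_cast; rfl

theorem X_mul_derivative_monomial [CommSemiring R] (m : ℕ) (a : R) :
    X * d⁄dX R (monomial m a) = C (m : R) * monomial m a := by
  ext n
  rw [coeff_X_mul_derivative, coeff_C_mul, coeff_monomial]
  split_ifs with h <;> simp [h]

theorem C_mul_sub_X_mul_derivative_mk [CommRing R] (c : R) (f : ℕ → R) :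
    C c * mk f - X * d⁄dX R (mk f) = mk fun k => (c - k) * f k := by
  ext n
  rw [map_sub, coeff_C_mul, coeff_X_mul_derivative, coeff_mk, coeff_mk]
  ring

theorem derivative_monomial_succ_inv_factorial [Field R] [CharZero R] (m : ℕ) :
    d⁄dX R (monomial (m + 1) (1 / ((m + 1).factorial : R))) = monomial m (1 / (m.factorial : R)) := by
  ext n
  rw [coeff_derivative, coeff_monomial, coeff_monomial]
  by_cases h : n = m
  · subst h
    rw [if_pos rfl, if_pos rfl, Nat.factorial_succ]
    push_cast
    field_simp
  · rw [if_neg (by omega), if_neg h, zero_mul]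

/-- After multiplying by `F * F'`, the Leibniz rule `F * A' + F' * A = M'` and Euler's relation
`X * M' = m • M` reduce both sides to `m • M * F' * A`. -/
theorem C_mul_sq_eq_of_mul_eq_monomial [CommRing R] [IsDomain R] {F A B : R⟦X⟧} {m : ℕ} {a : R}
    (hF' : d⁄dX R F ≠ 0) (hA : F * A = monomial m a) (hB : d⁄dX R F * B = d⁄dX R (monomial m a)) :
    C (m : R) * A ^ 2 = (C (m : R) * A - X * d⁄dX R A) * B := by
  have hF : F ≠ 0 := by rintro rfl; exact hF' (map_zero _)
  have hLeibniz : F * d⁄dX R A + d⁄dX R F * A = d⁄dX R (monomial m a) := by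
    rw [← hA, Derivation.leibniz, smul_eq_mul, smul_eq_mul]; ring
  have hEuler := X_mul_derivative_monomial m a
  refine mul_left_cancel₀ (mul_ne_zero hF hF') ?_
  linear_combination (C (m : R) * A * d⁄dX R F - C (m : R) * d⁄dX R (monomial m a)) * hA
    - (C (m : R) * A - X * d⁄dX R A) * F * hB
    + X * d⁄dX R (monomial m a) * hLeibniz
    + (d⁄dX R (monomial m a) - d⁄dX R F * A) * hEuler

theorem factorial_mul_coeff_mul_mk_div_factorial [Field R] [CharZero R] (a b : ℕ → R) (n : ℕ) :
    (n.factorial : R) * coeff n ((mk fun k => a k / k.factorial) * mk fun k => b k / k.factorial) =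
      ∑ i ∈ range (n + 1), (n.choose i : R) * a i * b (n - i) := by
  rw [coeff_mul, Nat.sum_antidiagonal_eq_sum_range_succ_mk, mul_sum]
  refine sum_congr rfl fun i hi => ?_
  have hi : i ≤ n := Nat.lt_succ_iff.mp (mem_range.mp hi)
  rw [coeff_mk, coeff_mk, Nat.cast_choose R hi]
  field_simp

theorem derivative_mk_even_tail [Field R] [CharZero R] (N : ℕ) :
    d⁄dX R (mk fun m => if Even m ∧ 2 * N ≤ m then 1 / (m.factorial : R) else 0) =
      mk fun m => if Odd m ∧ 2 * N - 1 ≤ m then 1 / (m.factorial : R) else 0 := by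
  ext n
  have hparity : (Even (n + 1) ∧ 2 * N ≤ n + 1) ↔ (Odd n ∧ 2 * N - 1 ≤ n) := by
    rw [Nat.even_add_one, Nat.not_even_iff_odd]
    exact and_congr_right fun _ => by omega
  rw [coeff_derivative, coeff_mk, coeff_mk]
  by_cases h : Odd n ∧ 2 * N - 1 ≤ n
  · rw [if_pos (hparity.mpr h), if_pos h, Nat.factorial_succ]
    push_cast
    field_simp
  · rw [if_neg (mt hparity.mp h), if_neg h, zero_mul]

end PowerSeries

/-- For `N ≥ 1` and `n ≥ 0`,
`∑_{i=0}^n C(n,i) E_{N,i} E_{N,n-i} = ∑_{k=0}^n C(n,k) ((2N-k)/(2N)) E_{N,k} Ê_{N-1,n-k}`,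
where the hypergeometric Euler numbers `E_{N,n}` are defined by
`(cosh t - ∑_{k<N} t^{2k}/(2k)!)·∑ E_{N,n} t^n/n! = t^{2N}/(2N)!` and the complementary ones
`Ê_{N-1,n}` by `(sinh t - ∑_{k<N-1} t^{2k+1}/(2k+1)!)·∑ Ê_{N-1,n} t^n/n! = t^{2N-1}/(2N-1)!`. -/
theorem hypergeometric_euler_sum_products_two (N : ℕ) (hN : 1 ≤ N) (E Ehat : ℕ → ℝ)
    (hE : (PowerSeries.mk fun m => if Even m ∧ 2 * N ≤ m then (1 : ℝ) / (Nat.factorial m) else 0) *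
        (PowerSeries.mk fun n => E n / (Nat.factorial n)) =
      PowerSeries.monomial (2 * N) ((1 : ℝ) / (Nat.factorial (2 * N))))
    (hEhat : (PowerSeries.mk fun m =>
          if Odd m ∧ 2 * N - 1 ≤ m then (1 : ℝ) / (Nat.factorial m) else 0) *
        (PowerSeries.mk fun n => Ehat n / (Nat.factorial n)) =
      PowerSeries.monomial (2 * N - 1) ((1 : ℝ) / (Nat.factorial (2 * N - 1)))) :
    ∀ n : ℕ,
      ∑ i ∈ Finset.range (n + 1), (Nat.choose n i : ℝ) * E i * E (n - i) =
        ∑ k ∈ Finset.range (n + 1),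
          (Nat.choose n k : ℝ) * ((2 * N : ℝ) - k) / (2 * N : ℝ) * E k * Ehat (n - k) := by
  intro n
  have h2N : 2 * N = 2 * N - 1 + 1 := by omega
  have hM' := derivative_monomial_succ_inv_factorial (R := ℝ) (2 * N - 1)
  rw [← h2N] at hM'
  have hF' := derivative_mk_even_tail (R := ℝ) N
  have hF'ne : d⁄dX ℝ (mk fun m => if Even m ∧ 2 * N ≤ m then 1 / (m.factorial : ℝ) else 0) ≠ 0 := by
    rw [hF']
    intro h
    have := congrArg (coeff (2 * N - 1)) h
    rw [coeff_mk, if_pos ⟨⟨N - 1, by omega⟩, le_rfl⟩, map_zero] at this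
    simp [Nat.factorial_ne_zero] at this
  have key := C_mul_sq_eq_of_mul_eq_monomial hF'ne hE (by rw [hF', hM']; exact hEhat)
  simp_rw [C_mul_sub_X_mul_derivative_mk, sq, ← mul_div_assoc] at key
  have hcoeff := congrArg (fun f => (n.factorial : ℝ) * coeff n f) key
  simp only [coeff_C_mul, mul_left_comm _ ((2 * N : ℕ) : ℝ),
    factorial_mul_coeff_mul_mk_div_factorial] at hcoeff
  push_cast at hcoeff
  have hc : (2 * N : ℝ) ≠ 0 := by positivity
  calc _ = (2 * N : ℝ) * (∑ i ∈ range (n + 1), (n.choose i : ℝ) * E i * E (n - i)) / (2 * N) := by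
        field_simp
    _ = _ := by
      rw [hcoeff, sum_div]
      exact sum_congr rfl fun k _ => by ring
end

section
/- For N ≥ 0 and n ≥ 1, Ê_{N,2n} = (2n)! Σ_{k=1}^{n} (-1)^k Σ_{i_1+⋯+i_k=n, i_j ≥ 1} ((2N+1)!)^k / ((2N+2i_1+1)! ⋯ (2N+2i_k+1)!). -/
/-!
Put `b m = (2N+1)!/(2N+2m+1)!` and `u = ∑_{m ≥ 1} b m xᵐ`. Divided by `(2n)!`, the recurrence says
exactly that `∑ₙ Ê_{N,2n} xⁿ/(2n)!` is the inverse of `1 + u`. Expanding `1/(1 + u) = ∑ₖ (-u)ᵏ`,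
the coefficient of `xⁿ` in `uᵏ` is the sum over compositions `n = i₁ + ⋯ + i_k` of
`b i₁ ⋯ b i_k`, which is the inner sum of the formula.
-/

open Finset

section CompositionSum

variable {R : Type*}

def compositionSum [CommSemiring R] (b : ℕ → R) (k n : ℕ) : R :=
  ∑ c ∈ (Nat.antidiagonalTuple k n).filter (fun c => ∀ j, 1 ≤ c j), ∏ j, b (c j)

section CommSemiring

variable [CommSemiring R] (b : ℕ → R)

theorem compositionSum_zero_zero : compositionSum b 0 0 = 1 := by
  simp [compositionSum, Nat.antidiagonalTuple_zero_zero]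

theorem compositionSum_zero_left {n : ℕ} (hn : n ≠ 0) : compositionSum b 0 n = 0 := by
  obtain ⟨n, rfl⟩ := Nat.exists_eq_succ_of_ne_zero hn
  simp [compositionSum, Nat.antidiagonalTuple_zero_succ]

theorem compositionSum_eq_zero_of_lt {k n : ℕ} (h : n < k) : compositionSum b k n = 0 := by
  refine sum_eq_zero fun c hc => absurd hc ?_
  simp only [mem_filter, Nat.mem_antidiagonalTuple, not_and]
  intro hsum hpos
  have : k ≤ ∑ j, c j := by
    simpa using (sum_le_sum fun j _ => hpos j : ∑ _j : Fin k, 1 ≤ ∑ j, c j)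
  omega

/-- Split off the first part `n - i` of a composition of `n`. -/
theorem compositionSum_succ (k n : ℕ) :
    compositionSum b (k + 1) n = ∑ i ∈ range n, b (n - i) * compositionSum b k i := by
  simp only [compositionSum, mul_sum]
  rw [sum_sigma']
  refine sum_nbij' (fun c => ⟨n - c 0, Fin.tail c⟩) (fun p => Fin.cons (n - p.1) p.2)
    ?_ ?_ ?_ ?_ ?_
  · intro c hc
    simp only [mem_filter, Nat.mem_antidiagonalTuple, Fin.sum_univ_succ] at hc
    simp only [mem_sigma, mem_range, mem_filter, Nat.mem_antidiagonalTuple, Fin.tail]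
    have := hc.2 0
    exact ⟨by omega, by omega, fun j => hc.2 j.succ⟩
  · rintro ⟨i, t⟩ hp
    simp only [mem_sigma, mem_range, mem_filter, Nat.mem_antidiagonalTuple] at hp
    simp only [mem_filter, Nat.mem_antidiagonalTuple, Fin.sum_univ_succ, Fin.cons_zero,
      Fin.cons_succ, Fin.forall_fin_succ]
    exact ⟨by omega, by omega, hp.2.2⟩
  · intro c hc
    simp only [mem_filter, Nat.mem_antidiagonalTuple, Fin.sum_univ_succ] at hc
    have : n - (n - c 0) = c 0 := by omega
    simp [this]
  · rintro ⟨i, t⟩ hp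
    simp only [mem_sigma, mem_range] at hp
    simp [Nat.sub_sub_self hp.1.le]
  · intro c hc
    simp only [mem_filter, Nat.mem_antidiagonalTuple, Fin.sum_univ_succ] at hc
    rw [Fin.prod_univ_succ, Nat.sub_sub_self (by omega)]
    rfl

end CommSemiring

section CommRing

variable [CommRing R] (b : ℕ → R)

/-- The `n`-th coefficient of the inverse of the power series `1 + ∑_{m ≥ 1} b m Xᵐ`. -/
def signedCompositionSum (n : ℕ) : R :=
  ∑ k ∈ range (n + 1), (-1) ^ k * compositionSum b k n

theorem signedCompositionSum_zero : signedCompositionSum b 0 = 1 := by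
  simp [signedCompositionSum, compositionSum_zero_zero]

theorem signedCompositionSum_eq_sum_range {n m : ℕ} (h : n < m) :
    signedCompositionSum b n = ∑ k ∈ range m, (-1) ^ k * compositionSum b k n := by
  refine sum_subset (range_subset_range.mpr h) fun k _ hk => ?_
  rw [compositionSum_eq_zero_of_lt b (by simpa using hk), mul_zero]

theorem signedCompositionSum_eq_sum_Icc {n : ℕ} (hn : n ≠ 0) :
    signedCompositionSum b n = ∑ k ∈ Icc 1 n, (-1) ^ k * compositionSum b k n := by
  rw [signedCompositionSum, sum_range_succ', compositionSum_zero_left b hn, mul_zero, add_zero,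
    ← Ico_add_one_right_eq_Icc, sum_Ico_eq_sum_range, Nat.add_sub_cancel]
  simp only [add_comm 1]

theorem signedCompositionSum_eq_neg_sum {n : ℕ} (hn : n ≠ 0) :
    signedCompositionSum b n = -∑ i ∈ range n, b (n - i) * signedCompositionSum b i := by
  have hterm (i : ℕ) (hi : i ∈ range n) : b (n - i) * signedCompositionSum b i =
      ∑ k ∈ range n, (-1) ^ k * (b (n - i) * compositionSum b k i) := by
    rw [signedCompositionSum_eq_sum_range b (mem_range.mp hi), mul_sum]
    exact sum_congr rfl fun k _ => by ring
  rw [sum_congr rfl hterm, sum_comm]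
  simp only [← mul_sum, ← compositionSum_succ]
  rw [signedCompositionSum, sum_range_succ', compositionSum_zero_left b hn, mul_zero, add_zero,
    ← sum_neg_distrib]
  exact sum_congr rfl fun k _ => by ring

theorem eq_signedCompositionSum {f : ℕ → R} (h0 : f 0 = 1)
    (hrec : ∀ n, n ≠ 0 → f n = -∑ i ∈ range n, b (n - i) * f i) :
    f = signedCompositionSum b := by
  funext n
  induction n using Nat.strong_induction_on with
  | _ n ih =>
    rcases eq_or_ne n 0 with rfl | hn
    · rw [h0, signedCompositionSum_zero]
    · rw [hrec n hn, signedCompositionSum_eq_neg_sum b hn]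
      exact congrArg _ (sum_congr rfl fun i hi => by rw [ih i (mem_range.mp hi)])

end CommRing

end CompositionSum

theorem complementary_hypergeometric_euler_explicit_general (N : ℕ) (Ehat : ℕ → ℝ)
    (h0 : Ehat 0 = 1)
    (hrec : ∀ n : ℕ, 1 ≤ n →
      Ehat (2 * n) = -(Nat.factorial (2 * n) : ℝ) * (Nat.factorial (2 * N + 1)) *
        ∑ i ∈ Finset.range n,
          Ehat (2 * i) /
            ((Nat.factorial (2 * N + 2 * n - 2 * i + 1) : ℝ) * (Nat.factorial (2 * i)))) :
    ∀ n : ℕ, 1 ≤ n →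
      Ehat (2 * n) = (Nat.factorial (2 * n) : ℝ) *
        ∑ k ∈ Finset.Icc 1 n, (-1 : ℝ) ^ k *
          ∑ c ∈ (Finset.Nat.antidiagonalTuple k n).filter (fun c => ∀ j, 1 ≤ c j),
            ((Nat.factorial (2 * N + 1) : ℝ)) ^ k /
              ∏ j, (Nat.factorial (2 * N + 2 * c j + 1) : ℝ) := by
  set b : ℕ → ℝ := fun m => (2 * N + 1).factorial / (2 * N + 2 * m + 1).factorial
  have hscaled : (fun n => Ehat (2 * n) / (2 * n).factorial) = signedCompositionSum b := by
    refine eq_signedCompositionSum b (by simp [h0]) fun n hn => ?_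
    rw [hrec n (Nat.one_le_iff_ne_zero.mpr hn), mul_assoc, neg_mul,
      neg_div, mul_div_cancel_left₀ _ (by positivity), mul_sum]
    refine congrArg _ (sum_congr rfl fun i hi => ?_)
    have hidx : 2 * N + 2 * n - 2 * i + 1 = 2 * N + 2 * (n - i) + 1 := by
      have := mem_range.mp hi
      omega
    rw [hidx]
    ring
  intro n hn
  have hscaled_n := congrFun hscaled n
  rw [signedCompositionSum_eq_sum_Icc b (by omega), div_eq_iff (by positivity)] at hscaled_n
  rw [hscaled_n, mul_comm]
  refine congrArg _ (sum_congr rfl fun k _ => congrArg _ (sum_congr rfl fun c _ => ?_))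
  simp [b, prod_div_distrib]

/-- For `N ≥ 0` and `n ≥ 1`,
`Ê_{N,2n} = (2n)! ∑_{k=1}^n (-1)^k ∑_{i₁+⋯+i_k=n, i_j ≥ 1}
((2N+1)!)^k/((2N+2i₁+1)!⋯(2N+2i_k+1)!)`, the complementary hypergeometric Euler numbers being
defined by `Ê_{N,0}=1`, `Ê_{N,n}=0` for odd `n`, and the stated recurrence. -/
theorem complementary_hypergeometric_euler_explicit (N : ℕ) (Ehat : ℕ → ℝ)
    (h0 : Ehat 0 = 1)
    (hodd : ∀ n : ℕ, Odd n → Ehat n = 0)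
    (hrec : ∀ n : ℕ, 1 ≤ n →
      Ehat (2 * n) = -(Nat.factorial (2 * n) : ℝ) * (Nat.factorial (2 * N + 1)) *
        ∑ i ∈ Finset.range n,
          Ehat (2 * i) /
            ((Nat.factorial (2 * N + 2 * n - 2 * i + 1) : ℝ) * (Nat.factorial (2 * i)))) :
    ∀ n : ℕ, 1 ≤ n →
      Ehat (2 * n) = (Nat.factorial (2 * n) : ℝ) *
        ∑ k ∈ Finset.Icc 1 n, (-1 : ℝ) ^ k *
          ∑ c ∈ (Finset.Nat.antidiagonalTuple k n).filter (fun c => ∀ j, 1 ≤ c j),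
            ((Nat.factorial (2 * N + 1) : ℝ)) ^ k /
              ∏ j, (Nat.factorial (2 * N + 2 * c j + 1) : ℝ) :=
  complementary_hypergeometric_euler_explicit_general N Ehat h0 hrec
end

section
/- For every N ≥ 0, Ê_{N,2} = -2/((2N+2)(2N+3)) and Ê_{N,4} = 2·4!·(4N+7)/((2N+2)²(2N+3)²(2N+4)(2N+5)). -/
open Finset Nat

/-!
Multiplying the recurrence for `n = 2` and `n = 4` by `(2N+3)!` and `(2N+5)!` turns it into the
triangular linear system
`1 + Ê₂ (2N+2)(2N+3)/2 = 0`, `1 + Ê₂ (2N+4)(2N+5)/2 + Ê₄ (2N+2)(2N+3)(2N+4)(2N+5)/24 = 0`,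
solved by back substitution; the factor `4N+7` comes from `(2N+4)(2N+5) - (2N+2)(2N+3) = 2(4N+7)`.
-/

noncomputable def eulerRecSum (N : ℕ) (E : ℕ → ℝ) (n : ℕ) : ℝ :=
  ∑ i ∈ range (n / 2 + 1), E (2 * i) / ((2 * N + n - 2 * i + 1)! * (2 * i)! : ℝ)

lemma cast_factorial_add_two (m : ℕ) : ((m + 2)! : ℝ) = (m + 1) * (m + 2) * m ! := by
  push_cast [factorial_succ]
  ring

section

variable (N : ℕ) (E : ℕ → ℝ)

lemma factorial_mul_eulerRecSum_two :
    ((2 * N + 3)! : ℝ) * eulerRecSum N E 2 = E 0 + E 2 * ((2 * N + 2) * (2 * N + 3) / 2) := by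
  simp only [eulerRecSum, sum_range_succ, sum_range_zero]
  norm_num [cast_factorial_add_two (2 * N + 1)]
  field_simp
  ring

lemma factorial_mul_eulerRecSum_four :
    ((2 * N + 5)! : ℝ) * eulerRecSum N E 4 = E 0 + E 2 * ((2 * N + 4) * (2 * N + 5) / 2)
      + E 4 * ((2 * N + 2) * (2 * N + 3) * (2 * N + 4) * (2 * N + 5) / 24) := by
  simp only [eulerRecSum, sum_range_succ, sum_range_zero]
  norm_num [show 2 * N + 4 - 2 + 1 = 2 * N + 3 by omega, cast_factorial_add_two (2 * N + 3),
    cast_factorial_add_two (2 * N + 1)]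
  field_simp
  ring

end

/-- For every `N ≥ 0`, `Ê_{N,2} = -2/((2N+2)(2N+3))` and
`Ê_{N,4} = 2·4!·(4N+7)/((2N+2)²(2N+3)²(2N+4)(2N+5))`, the complementary hypergeometric Euler
numbers being defined by `Ê_{N,0}=1` and the recurrence
`∑_{i=0}^{n/2} Ê_{N,2i}/((2N+n-2i+1)!(2i)!)=0` for even `n ≥ 2`. -/
theorem complementary_hypergeometric_euler_values (N : ℕ) (Ehat : ℕ → ℝ)
    (h0 : Ehat 0 = 1)
    (hrec : ∀ n : ℕ, 2 ≤ n → Even n →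
      ∑ i ∈ Finset.range (n / 2 + 1),
        Ehat (2 * i) /
          ((Nat.factorial (2 * N + n - 2 * i + 1) : ℝ) * (Nat.factorial (2 * i))) = 0) :
    Ehat 2 = -2 / (((2 * N + 2 : ℕ) : ℝ) * ((2 * N + 3 : ℕ) : ℝ)) ∧
    Ehat 4 = 2 * (Nat.factorial 4 : ℝ) * ((4 * N + 7 : ℕ) : ℝ) /
      (((2 * N + 2 : ℕ) : ℝ) ^ 2 * ((2 * N + 3 : ℕ) : ℝ) ^ 2 *
        ((2 * N + 4 : ℕ) : ℝ) * ((2 * N + 5 : ℕ) : ℝ)) := by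
  have h2 := factorial_mul_eulerRecSum_two N Ehat
  have h4 := factorial_mul_eulerRecSum_four N Ehat
  rw [eulerRecSum, hrec 2 le_rfl even_two, mul_zero, h0] at h2
  rw [eulerRecSum, hrec 4 (by norm_num) (by decide), mul_zero, h0] at h4
  have hE2 : Ehat 2 = -2 / ((2 * N + 2) * (2 * N + 3)) := by
    field_simp
    linarith
  refine ⟨by push_cast; exact hE2, ?_⟩
  rw [hE2] at h4
  push_cast
  rw [eq_div_iff (by positivity)]
  field_simp at h4
  norm_num [factorial]
  linear_combination -h4
end
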